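/- arXiv:2403.03295 — 8 statements merged into one kernel-verified Lean document; each statement's English description precedes it below -/
import Mathlib

section
/- For any integers n, t, p ≥ 1 and any sequence 𝐛 ∈ (ℤ/pℤ)^n, one has p^{|supp(𝐛)|} · |{(𝐢,𝐱) : 𝐢 ∈ supp(𝐛)^t, 𝐱 ∈ (ℤ/pℤ)^t, ms(𝐢,𝐱) = 𝐛}| = p^t · |{𝐢 ∈ supp(𝐛)^t : range(𝐢) = supp(𝐛)}|. -/
/-!
For fixed `i`, the map `x ↦ ms i x` is an additive homomorphism `(ℤ/pℤ)^t → (ℤ/pℤ)^n`. It sends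
`Pi.single r a` to `Pi.single (i r) a`, so its image is exactly the set of vectors vanishing off
`range i`, which has `p ^ |range i|` elements; hence each of its nonempty fibres has
`p ^ t / p ^ |range i|` elements. When `range i ⊆ supp b`, the vector `b` lies in the image iff
`range i = supp b`, and summing over `i` gives the identity.
-/

/-- The modular signature of a pair of sequences `i ∈ [n]^t`, `x ∈ (ℤ/pℤ)^t`:
its `q`-th coordinate is `∑_{r : i r = q} x r (mod p)`. -/
def ms {n t p : ℕ} (i : Fin t → Fin n) (x : Fin t → ZMod p) : Fin n → ZMod p :=
  fun q => ∑ r ∈ Finset.univ.filter (fun r => i r = q), x r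

/-- The support of `b ∈ (ℤ/pℤ)^n`: the set of coordinates with nonzero entry. -/
def msupp {n p : ℕ} (b : Fin n → ZMod p) : Finset (Fin n) :=
  Finset.univ.filter (fun q => b q ≠ 0)

open Finset

lemma AddMonoidHom.card_image_mul_card_fiber {G H : Type*} [AddGroup G] [Fintype G] [AddMonoid H]
    [DecidableEq H] (f : G →+ H) {b : H} (hb : b ∈ Set.range f) :
    #(univ.image f) * #{x | f x = b} = Fintype.card G := by
  rw [← card_univ, card_eq_sum_card_image f univ, ← smul_eq_mul, ← sum_const]
  refine sum_congr rfl fun y hy => card_fiber_eq_of_mem_range f hb ?_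
  obtain ⟨x, -, rfl⟩ := mem_image.mp hy
  exact ⟨x, rfl⟩

lemma Fintype.card_filter_forall_notMem_eq_zero {ι M : Type*} [Fintype ι] [DecidableEq ι]
    [Fintype M] [Zero M] (s : Finset ι) [DecidablePred fun c : ι → M => ∀ q ∉ s, c q = 0] :
    #{c : ι → M | ∀ q ∉ s, c q = 0} = Fintype.card M ^ #s := by
  have : ({c : ι → M | ∀ q ∉ s, c q = 0} : Finset _) =
      Fintype.piFinset fun q => if q ∈ s then univ else {0} := by
    ext c
    simp only [mem_filter, mem_univ, true_and, Fintype.mem_piFinset]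
    refine forall_congr' fun q => ?_
    split_ifs <;> simp [*]
  rw [this, Fintype.card_piFinset, prod_apply_ite, prod_const, prod_const, card_univ,
    card_singleton, one_pow, mul_one, filter_mem_eq_inter, univ_inter]

section

variable {n t p : ℕ}

def msHom (i : Fin t → Fin n) : (Fin t → ZMod p) →+ (Fin n → ZMod p) where
  toFun := ms i
  map_zero' := by ext; simp [ms]
  map_add' x y := by ext; simp [ms, sum_add_distrib]

@[simp]
lemma coe_msHom (i : Fin t → Fin n) : ⇑(msHom (p := p) i) = ms i := rfl

lemma ms_single (i : Fin t → Fin n) (r : Fin t) (a : ZMod p) :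
    ms i (Pi.single r a) = Pi.single (i r) a := by
  ext q
  simp [ms, Pi.single_apply, eq_comm]

lemma ms_apply_eq_zero {i : Fin t → Fin n} {q : Fin n} (hq : q ∉ univ.image i)
    (x : Fin t → ZMod p) : ms i x q = 0 := by
  refine sum_eq_zero fun r hr => absurd ?_ hq
  simp only [mem_filter, mem_univ, true_and] at hr
  exact hr ▸ mem_image_of_mem i (mem_univ r)

lemma mem_range_ms_iff {i : Fin t → Fin n} {c : Fin n → ZMod p} :
    c ∈ Set.range (ms i) ↔ ∀ q ∉ univ.image i, c q = 0 := by
  refine ⟨fun ⟨x, hx⟩ q hq => hx ▸ ms_apply_eq_zero hq x, fun hc => ?_⟩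
  change c ∈ (msHom i).range
  rw [← univ_sum_single c]
  refine AddSubgroup.sum_mem _ fun q _ => ?_
  by_cases hq : q ∈ univ.image i
  · obtain ⟨r, -, rfl⟩ := mem_image.mp hq
    exact ⟨Pi.single r (c (i r)), ms_single i r _⟩
  · rw [hc q hq, Pi.single_zero]
    exact zero_mem _

variable [NeZero p]

lemma card_image_ms (i : Fin t → Fin n) :
    #(univ.image (ms (p := p) i)) = p ^ #(univ.image i) := by
  have : univ.image (ms (p := p) i) = ({c | ∀ q ∉ univ.image i, c q = 0} : Finset _) := by
    ext c
    rw [mem_image_univ_iff_mem_range, mem_filter_univ]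
    exact mem_range_ms_iff
  rw [this, Fintype.card_filter_forall_notMem_eq_zero, ZMod.card]

lemma pow_card_image_mul_card_ms_fiber {i : Fin t → Fin n} {b : Fin n → ZMod p}
    (hb : ∀ q ∉ univ.image i, b q = 0) :
    p ^ #(univ.image i) * #{x | ms i x = b} = p ^ t := by
  have := (msHom (p := p) i).card_image_mul_card_fiber (mem_range_ms_iff.mpr hb)
  rwa [coe_msHom, card_image_ms, Fintype.card_fun, ZMod.card, Fintype.card_fin] at this

lemma pow_card_msupp_mul_card_ms_fiber {i : Fin t → Fin n} {b : Fin n → ZMod p}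
    (hi : ∀ r, i r ∈ msupp b) :
    p ^ #(msupp b) * #{x | ms i x = b} = if univ.image i = msupp b then p ^ t else 0 := by
  split_ifs with h
  · rw [← h]
    exact pow_card_image_mul_card_ms_fiber fun q hq => by simpa [msupp, h] using hq
  · have hsub : univ.image i ⊆ msupp b := by simpa [subset_iff] using hi
    obtain ⟨q, hqb, hqi⟩ := exists_of_ssubset (hsub.ssubset_of_ne h)
    rw [card_eq_zero.mpr (filter_eq_empty_iff.mpr fun x _ hx => ?_), mul_zero]
    exact (mem_filter.mp hqb).2 (hx ▸ ms_apply_eq_zero hqi x)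

end

theorem count_ms_support_general (n t p : ℕ) [NeZero p]
    (b : Fin n → ZMod p) :
    p ^ (msupp b).card *
      (Finset.univ.filter (fun ix : (Fin t → Fin n) × (Fin t → ZMod p) =>
        (∀ r, ix.1 r ∈ msupp b) ∧ ms ix.1 ix.2 = b)).card
    = p ^ t *
      (Finset.univ.filter (fun i : Fin t → Fin n =>
        (∀ r, i r ∈ msupp b) ∧ Finset.image i Finset.univ = msupp b)).card := by
  have hsplit : #{ix : (Fin t → Fin n) × (Fin t → ZMod p) |
      (∀ r, ix.1 r ∈ msupp b) ∧ ms ix.1 ix.2 = b} =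
      ∑ i : Fin t → Fin n with ∀ r, i r ∈ msupp b, #{x | ms i x = b} := by
    rw [card_filter, ← univ_product_univ, sum_product, sum_filter]
    refine sum_congr rfl fun i _ => ?_
    rw [card_filter]
    split_ifs <;> simp [*]
  rw [hsplit, mul_sum, sum_congr rfl fun i hi => pow_card_msupp_mul_card_ms_fiber
    (mem_filter.mp hi).2, sum_ite, sum_const_zero, add_zero, sum_const, smul_eq_mul,
    filter_filter, mul_comm]

/-- `p^{|supp b|} · |{(𝐢,𝐱) : 𝐢 ∈ supp(𝐛)^t, ms(𝐢,𝐱) = 𝐛}|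
  = p^t · |{𝐢 ∈ supp(𝐛)^t : range(𝐢) = supp(𝐛)}|`. -/
theorem count_ms_support (n t p : ℕ) [NeZero p] (hn : 1 ≤ n) (ht : 1 ≤ t) (hp : 1 ≤ p)
    (b : Fin n → ZMod p) :
    p ^ (msupp b).card *
      (Finset.univ.filter (fun ix : (Fin t → Fin n) × (Fin t → ZMod p) =>
        (∀ r, ix.1 r ∈ msupp b) ∧ ms ix.1 ix.2 = b)).card
    = p ^ t *
      (Finset.univ.filter (fun i : Fin t → Fin n =>
        (∀ r, i r ∈ msupp b) ∧ Finset.image i Finset.univ = msupp b)).card :=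
  count_ms_support_general n t p b
end

section
/- Let n, t ≥ 0 and p ≥ 1 be integers, let S ⊆ [n] with |S| = k, and let 𝐛 ∈ (ℤ/pℤ)^n satisfy ∅ ≠ supp(𝐛) ⊆ S. Then p · |{(𝐢,𝐱) : 𝐢 ∈ S^t, 𝐱 ∈ (ℤ/pℤ)^t, ms(𝐢,𝐱) = 𝐛}| ≤ (p + k^t) · |{(𝐢,𝐱) : 𝐢 ∈ supp(𝐛)^t, 𝐱 ∈ (ℤ/pℤ)^t, ms(𝐢,𝐱) = 𝐛}|. -/
/-!
For a fixed `i`, the map `x ↦ ms i x` is a surjective additive map onto the vectors supported on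
the range of `i`, so `ms i x = b` has `p ^ (t - |range i|)` solutions when `supp b ⊆ range i` and
none otherwise. The `i ∈ S^t` with range exactly `supp b` also lie in `supp(b)^t`. Any other
contributing `i` has range strictly larger than `supp b`, so it has at most `1/p` as many
solutions as the sequence obtained by sending its values outside `supp b` to a fixed point of
`supp b`; and there are at most `k ^ t` such `i`.
-/

open Finset

theorem card_filter_prod_eq_sum {α β : Type*} [Fintype α] [Fintype β]
    (Q : α → Prop) (R : α → β → Prop) [DecidablePred Q] [∀ a, DecidablePred (R a)] :
    #{ab : α × β | Q ab.1 ∧ R ab.1 ab.2} = ∑ a with Q a, #{b | R a b} := by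
  simp only [card_filter, Fintype.sum_prod_type, sum_filter, ite_and, sum_ite_irrel, sum_const_zero]

theorem card_filter_forall_mem {α : Type*} [Fintype α] [DecidableEq α] (s : Finset α)
    (t : ℕ) :
    #{f : Fin t → α | ∀ i, f i ∈ s} = #s ^ t := by
  rw [← Fintype.card_piFinset_const]
  congr 1
  ext f
  simp [Fintype.mem_piFinset]

theorem AddMonoidHom.card_fiber_mul_card_of_surjective {G H : Type*} [AddGroup G] [AddGroup H]
    [Fintype G] [Fintype H] [DecidableEq H] (f : G →+ H) (hf : Function.Surjective f) (y : H) :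
    #{g | f g = y} * Fintype.card H = Fintype.card G := by
  have h := card_eq_sum_card_fiberwise (f := f) (s := univ) (t := univ) fun g _ => mem_univ _
  rw [sum_congr rfl fun z _ => AddMonoidHom.card_fiber_eq_of_mem_range f (hf z) (hf y), sum_const,
    smul_eq_mul, card_univ, card_univ] at h
  rw [h, mul_comm]

theorem surjective_fiberwise_sum {α β M : Type*} [Fintype α] [DecidableEq β] [AddCommMonoid M]
    {f : α → β} (hf : Function.Surjective f) :
    Function.Surjective fun (x : α → M) (b : β) => ∑ a with f a = b, x a := by
  intro c
  refine ⟨Function.extend (Function.surjInv hf) c 0, funext fun b => ?_⟩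
  have hb : f (Function.surjInv hf b) = b := Function.surjInv_eq hf b
  change ∑ a with f a = b, _ = c b
  rw [sum_eq_single_of_mem _ (by simpa using hb)]
  · exact (Function.injective_surjInv hf).extend_apply c 0 b
  · intro a ha hne
    refine Function.extend_apply' _ _ _ ?_
    rintro ⟨b', rfl⟩
    rw [mem_filter, Function.surjInv_eq hf] at ha
    exact hne (by rw [ha.2])

theorem Finset.image_ite_mem_eq {α β : Type*} [Fintype α] [DecidableEq β] {T : Finset β}
    {y : β} (hy : y ∈ T) {f : α → β} (hT : T ⊆ univ.image f) :
    univ.image (fun a => if f a ∈ T then f a else y) = T := by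
  refine Subset.antisymm (fun z hz => ?_) (fun z hz => ?_)
  · obtain ⟨a, -, rfl⟩ := mem_image.mp hz
    split_ifs with h
    exacts [h, hy]
  · obtain ⟨a, -, rfl⟩ := mem_image.mp (hT hz)
    exact mem_image.mpr ⟨a, mem_univ a, if_pos hz⟩

section ModularSignature

variable {n t p : ℕ}

theorem msupp_ms_subset (i : Fin t → Fin n) (x : Fin t → ZMod p) :
    msupp (ms i x) ⊆ univ.image i := by
  intro q hq
  obtain ⟨r, hr, -⟩ := exists_ne_zero_of_sum_ne_zero (mem_filter.mp hq).2
  exact mem_image.mpr ⟨r, mem_univ r, (mem_filter.mp hr).2⟩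

theorem card_ms_eq_eq_zero_of_not_subset [NeZero p] (i : Fin t → Fin n) {b : Fin n → ZMod p}
    (hb : ¬ msupp b ⊆ univ.image i) : #{x | ms i x = b} = 0 := by
  rw [card_eq_zero, filter_eq_empty_iff]
  rintro x - rfl
  exact hb (msupp_ms_subset i x)

def msOnRange (i : Fin t → Fin n) : (Fin t → ZMod p) →+ (univ.image i → ZMod p) where
  toFun x q := ms i x q
  map_zero' := by funext q; simp [ms]
  map_add' x y := by funext q; simp [ms, sum_add_distrib]

theorem msOnRange_surjective (i : Fin t → Fin n) :
    Function.Surjective (msOnRange (p := p) i) := by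
  let ι : Fin t → univ.image i := fun r => ⟨i r, mem_image_of_mem i (mem_univ r)⟩
  have hι : Function.Surjective ι := by
    rintro ⟨q, hq⟩
    obtain ⟨r, -, rfl⟩ := mem_image.mp hq
    exact ⟨r, rfl⟩
  convert surjective_fiberwise_sum (M := ZMod p) hι using 4 with x q
  simp [msOnRange, ms, ι, Subtype.ext_iff]

theorem card_ms_eq_mul_pow [NeZero p] (i : Fin t → Fin n) {b : Fin n → ZMod p}
    (hb : msupp b ⊆ univ.image i) : #{x | ms i x = b} * p ^ #(univ.image i) = p ^ t := by
  have hfiber : ({x | ms i x = b} : Finset (Fin t → ZMod p)) =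
      ({x | msOnRange i x = fun q : univ.image i => b q} : Finset (Fin t → ZMod p)) := by
    ext x
    simp only [mem_filter, mem_univ, true_and, funext_iff]
    refine ⟨fun h q => h q, fun h q => ?_⟩
    by_cases hq : q ∈ univ.image i
    · exact h ⟨q, hq⟩
    · have hbq : b q = 0 := by_contra fun h => hq (hb (by simpa [msupp] using h))
      have hmsq : ms i x q = 0 :=
        by_contra fun h => hq (msupp_ms_subset i x (by simpa [msupp] using h))
      rw [hbq, hmsq]
  rw [hfiber]
  have h := (msOnRange i).card_fiber_mul_card_of_surjective (msOnRange_surjective i)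
    fun q : univ.image i => b q
  rwa [Fintype.card_fun, Fintype.card_coe, Fintype.card_fun, Fintype.card_fin, ZMod.card] at h

theorem mul_card_ms_eq_le [NeZero p] {i j : Fin t → Fin n} {b : Fin n → ZMod p}
    (hb : msupp b ⊆ univ.image j) (hji : univ.image j ⊂ univ.image i) :
    p * #{x | ms i x = b} ≤ #{x | ms j x = b} := by
  have hp : 0 < p := Nat.pos_of_ne_zero (NeZero.ne p)
  refine Nat.le_of_mul_le_mul_right ?_ (pow_pos hp #(univ.image j))
  calc p * #{x | ms i x = b} * p ^ #(univ.image j)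
      = #{x | ms i x = b} * p ^ (#(univ.image j) + 1) := by ring
    _ ≤ #{x | ms i x = b} * p ^ #(univ.image i) :=
        Nat.mul_le_mul_left _ (Nat.pow_le_pow_right hp (card_lt_card hji))
    _ = #{x | ms j x = b} * p ^ #(univ.image j) := by
        rw [card_ms_eq_mul_pow i (hb.trans hji.subset), card_ms_eq_mul_pow j hb]

theorem mul_card_ms_eq_le_sum [NeZero p] {i : Fin t → Fin n} {b : Fin n → ZMod p} {q₀ : Fin n}
    (hq₀ : q₀ ∈ msupp b) (hi : univ.image i ≠ msupp b) :
    p * #{x | ms i x = b} ≤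
      ∑ j : Fin t → Fin n with ∀ r, j r ∈ msupp b, #{x | ms j x = b} := by
  by_cases hsub : msupp b ⊆ univ.image i
  · set j := fun r => if i r ∈ msupp b then i r else q₀
    have hj : univ.image j = msupp b := image_ite_mem_eq hq₀ hsub
    calc p * #{x | ms i x = b}
        ≤ #{x | ms j x = b} :=
          mul_card_ms_eq_le hj.ge (hj ▸ ssubset_of_subset_of_ne hsub (Ne.symm hi))
      _ ≤ _ := single_le_sum (f := fun j => #{x | ms j x = b}) (fun _ _ => Nat.zero_le _)
          (by simpa using fun r => hj ▸ mem_image_of_mem j (mem_univ r))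
  · simp [card_ms_eq_eq_zero_of_not_subset i hsub]

end ModularSignature

theorem count_ms_overlap_bound_general (n t p : ℕ) [NeZero p]
    (S : Finset (Fin n)) (k : ℕ) (hk : S.card = k)
    (b : Fin n → ZMod p) (hb : (msupp b).Nonempty) :
    p * (Finset.univ.filter (fun ix : (Fin t → Fin n) × (Fin t → ZMod p) =>
        (∀ r, ix.1 r ∈ S) ∧ ms ix.1 ix.2 = b)).card
    ≤ (p + k ^ t) *
      (Finset.univ.filter (fun ix : (Fin t → Fin n) × (Fin t → ZMod p) =>
        (∀ r, ix.1 r ∈ msupp b) ∧ ms ix.1 ix.2 = b)).card := by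
  rw [card_filter_prod_eq_sum (fun i => ∀ r, i r ∈ S) (fun i x => ms i x = b),
    card_filter_prod_eq_sum (fun i => ∀ r, i r ∈ msupp b) (fun i x => ms i x = b)]
  set F : (Fin t → Fin n) → ℕ := fun i => #{x | ms i x = b}
  set R := ∑ i with ∀ r, i r ∈ msupp b, F i
  obtain ⟨q₀, hq₀⟩ := hb
  have hexact : ∑ i with (∀ r, i r ∈ S) ∧ univ.image i = msupp b, F i ≤ R := by
    refine sum_le_sum_of_subset (fun i hi => ?_)
    simp only [mem_filter, mem_univ, true_and] at hi ⊢
    exact fun r => hi.2 ▸ mem_image_of_mem i (mem_univ r)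
  have hrest : p * ∑ i with (∀ r, i r ∈ S) ∧ univ.image i ≠ msupp b, F i
      ≤ #{i : Fin t → Fin n | ∀ r, i r ∈ S} * R := by
    rw [mul_sum, ← smul_eq_mul, ← filter_filter]
    calc _ ≤ _ := sum_le_card_nsmul _ _ R fun i hi =>
          mul_card_ms_eq_le_sum hq₀ (mem_filter.mp hi).2
      _ ≤ _ := smul_le_smul_of_nonneg_right (card_filter_le _ _) (Nat.zero_le R)
  calc p * ∑ i with ∀ r, i r ∈ S, F i
      = p * ∑ i with (∀ r, i r ∈ S) ∧ univ.image i = msupp b, F i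
        + p * ∑ i with (∀ r, i r ∈ S) ∧ univ.image i ≠ msupp b, F i := by
        rw [← sum_filter_add_sum_filter_not _ (fun i => univ.image i = msupp b), mul_add,
          filter_filter, filter_filter]
    _ ≤ p * R + #{i : Fin t → Fin n | ∀ r, i r ∈ S} * R := by gcongr
    _ = (p + k ^ t) * R := by rw [card_filter_forall_mem, hk, add_mul]

/-- `p · |{(𝐢,𝐱) : 𝐢 ∈ S^t, ms(𝐢,𝐱) = 𝐛}|
  ≤ (p + k^t) · |{(𝐢,𝐱) : 𝐢 ∈ supp(𝐛)^t, ms(𝐢,𝐱) = 𝐛}|`. -/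
theorem count_ms_overlap_bound (n t p : ℕ) [NeZero p]
    (S : Finset (Fin n)) (k : ℕ) (hk : S.card = k)
    (b : Fin n → ZMod p) (hb : (msupp b).Nonempty) (hbS : msupp b ⊆ S) :
    p * (Finset.univ.filter (fun ix : (Fin t → Fin n) × (Fin t → ZMod p) =>
        (∀ r, ix.1 r ∈ S) ∧ ms ix.1 ix.2 = b)).card
    ≤ (p + k ^ t) *
      (Finset.univ.filter (fun ix : (Fin t → Fin n) × (Fin t → ZMod p) =>
        (∀ r, ix.1 r ∈ msupp b) ∧ ms ix.1 ix.2 = b)).card :=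
  count_ms_overlap_bound_general n t p S k hk b hb
end

section
/- Let k, m be positive integers and set n := k + m. Then for all integers j with 0 ≤ j ≤ k and l with 1 ≤ l ≤ m, one has (as real numbers) l² / ((k − j + l)·(j + l)) ≤ m/n. -/
/-- For `n = k + m`, `0 ≤ j ≤ k` and `1 ≤ l ≤ m`:
`l² / ((k − j + l)·(j + l)) ≤ m/n` as real numbers. -/
theorem ratio_le_m_div_n (k m : ℕ) (hk : 0 < k) (hm : 0 < m) (j l : ℕ)
    (hj : j ≤ k) (hl1 : 1 ≤ l) (hlm : l ≤ m) :
    (l : ℝ) ^ 2 / (((k : ℝ) - (j : ℝ) + (l : ℝ)) * ((j : ℝ) + (l : ℝ)))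
      ≤ (m : ℝ) / ((k : ℝ) + (m : ℝ)) := by
  have hj' : (j:ℝ) ≤ k := by exact_mod_cast hj
  have hl1' : (1:ℝ) ≤ l := by exact_mod_cast hl1
  have hlm' : (l:ℝ) ≤ m := by exact_mod_cast hlm
  have hk' : (0:ℝ) < k := by exact_mod_cast hk
  have hm' : (0:ℝ) < m := by exact_mod_cast hm
  have hjpos : (0:ℝ) ≤ j := j.cast_nonneg
  rw [div_le_div_iff₀ (by nlinarith) (by nlinarith)]
  nlinarith [mul_nonneg hjpos (sub_nonneg.2 hj'),
    mul_nonneg (mul_nonneg (sub_nonneg.2 hlm') (by linarith : (0:ℝ) ≤ l)) (by linarith : (0:ℝ) ≤ (k:ℝ))]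
end

section
/- Let k ≥ 1 and m ≥ 0 be integers and set n := k + m. Then for all integers j, l with 0 ≤ j ≤ k, 0 ≤ l ≤ m and k − j + l ≥ 1, one has (as real numbers) (j + l) + ((k − j)·l²)/(k·(k − j + l)²) − j/k − ((k − j)²·l)/(k·(k − j + l)²) ≤ (j + l)·(1 − (1/k)·(1 − 3m/n)). -/
theorem drift_aux (a j l d : ℝ) (ha : 0 ≤ a) (hj : 0 ≤ j) (hl : 0 ≤ l) (hd : 0 ≤ d) :
    (j + a + l + d) * l^2 * (3*a + l) ≤ 3 * (l + d) * (j + l) * (a + l)^2 := by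
  have hb : l^2*(3*a+l) ≤ 3*(j+l)*(a+l)^2 := by
    nlinarith [mul_nonneg (mul_nonneg ha ha) hl, mul_nonneg (mul_nonneg ha hl) hl,
      mul_nonneg (mul_nonneg hl hl) hl, mul_nonneg hj (sq_nonneg (a+l))]
  nlinarith [mul_nonneg hd (sub_nonneg.2 hb),
    mul_nonneg (mul_nonneg hj hl) (sq_nonneg a),
    mul_nonneg (mul_nonneg (mul_nonneg hj hl) ha) hl,
    mul_nonneg (mul_nonneg (mul_nonneg hj hl) hl) hl,
    mul_nonneg (mul_nonneg (mul_nonneg hl hl) hl) (add_nonneg ha hl)]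

/-- One-step drift bound for the random walk `K_t = J_t + L_t` in the Quantum
Coupon Collector analysis: with `n = k + m`, `0 ≤ j ≤ k`, `0 ≤ l ≤ m` and
`k − j + l ≥ 1`, the exact conditional expectation
`(j + l) + (k−j)l²/(k(k−j+l)²) − j/k − (k−j)²l/(k(k−j+l)²)` is at most
`(j + l)·(1 − (1/k)(1 − 3m/n))`. -/
theorem drift_bound (k m : ℕ) (hk : 1 ≤ k) (j l : ℕ) (hj : j ≤ k) (hl : l ≤ m)
    (hkl : 1 ≤ (k : ℝ) - (j : ℝ) + (l : ℝ)) :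
    ((j : ℝ) + (l : ℝ))
      + (((k : ℝ) - (j : ℝ)) * (l : ℝ) ^ 2)
          / ((k : ℝ) * ((k : ℝ) - (j : ℝ) + (l : ℝ)) ^ 2)
      - (j : ℝ) / (k : ℝ)
      - (((k : ℝ) - (j : ℝ)) ^ 2 * (l : ℝ))
          / ((k : ℝ) * ((k : ℝ) - (j : ℝ) + (l : ℝ)) ^ 2)
    ≤ ((j : ℝ) + (l : ℝ)) *
        (1 - (1 / (k : ℝ)) * (1 - 3 * (m : ℝ) / ((k : ℝ) + (m : ℝ)))) := by
  have hk0 : (0:ℝ) < k := by exact_mod_cast hk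
  have hn : (0:ℝ) < (k:ℝ) + m := by positivity
  have hs : (0:ℝ) < (k:ℝ) - j + l := lt_of_lt_of_le one_pos hkl
  have ha : (0:ℝ) ≤ (k:ℝ) - j := by
    have : (j:ℝ) ≤ k := by exact_mod_cast hj
    linarith
  have hd : (0:ℝ) ≤ (m:ℝ) - l := by
    have : (l:ℝ) ≤ m := by exact_mod_cast hl
    linarith
  have hj0 : (0:ℝ) ≤ (j:ℝ) := Nat.cast_nonneg j
  have hl0 : (0:ℝ) ≤ (l:ℝ) := Nat.cast_nonneg l
  have key := drift_aux ((k:ℝ) - j) j l ((m:ℝ) - l) ha hj0 hl0 hd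
  rw [← sub_nonneg]
  have hexpand : ((j : ℝ) + (l : ℝ)) *
        (1 - (1 / (k : ℝ)) * (1 - 3 * (m : ℝ) / ((k : ℝ) + (m : ℝ)))) -
      (((j : ℝ) + (l : ℝ))
      + (((k : ℝ) - (j : ℝ)) * (l : ℝ) ^ 2)
          / ((k : ℝ) * ((k : ℝ) - (j : ℝ) + (l : ℝ)) ^ 2)
      - (j : ℝ) / (k : ℝ)
      - (((k : ℝ) - (j : ℝ)) ^ 2 * (l : ℝ))
          / ((k : ℝ) * ((k : ℝ) - (j : ℝ) + (l : ℝ)) ^ 2))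
    = (3 * ((l:ℝ) + ((m:ℝ) - l)) * ((j:ℝ) + l) * (((k:ℝ) - j) + l)^2
        - ((j:ℝ) + ((k:ℝ)-j) + l + ((m:ℝ)-l)) * (l:ℝ)^2 * (3*((k:ℝ)-j) + l))
      / ((k:ℝ) * ((k:ℝ) - j + l)^2 * ((k:ℝ) + m)) := by
    field_simp
    ring
  rw [hexpand]
  apply div_nonneg (by linarith) (by positivity)
end

section
/- Let k ≥ 1 and m ≥ 1 be integers, set n := k + m, assume 3m ≤ n, and let c ≥ 0 be a real number. Then m · (1 − (1/k)·(1 − 3m/n))^{k·ln m + c·k} ≤ exp((3m·ln m − c·(n − 3m))/n), where the exponent k·ln m + c·k is a (nonnegative) real number and the power is the real power function. -/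
/-- Convergence bound for `E[K_ℓ]` after `ℓ = k·ln m + c·k` iterations:
with `n = k + m`, `3m ≤ n` and `c ≥ 0`,
`m·(1 − (1/k)(1 − 3m/n))^{k ln m + ck} ≤ exp((3m ln m − c(n − 3m))/n)`,
where the power is the real power function. -/
theorem expected_distance_bound (k m : ℕ) (hk : 1 ≤ k) (hm : 1 ≤ m)
    (h3m : 3 * m ≤ k + m) (c : ℝ) (hc : 0 ≤ c) :
    (m : ℝ) *
      (1 - (1 / (k : ℝ)) * (1 - 3 * (m : ℝ) / ((k : ℝ) + (m : ℝ))))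
        ^ ((k : ℝ) * Real.log (m : ℝ) + c * (k : ℝ))
    ≤ Real.exp ((3 * (m : ℝ) * Real.log (m : ℝ)
        - c * (((k : ℝ) + (m : ℝ)) - 3 * (m : ℝ))) / ((k : ℝ) + (m : ℝ))) := by
  have hk0 : (0:ℝ) < k := by exact_mod_cast hk
  have hm0 : (0:ℝ) < m := by exact_mod_cast hm
  have hn0 : (0:ℝ) < (k:ℝ) + m := by linarith
  have h3m' : 3 * (m:ℝ) ≤ (k:ℝ) + m := by exact_mod_cast h3m
  set x : ℝ := (1 / (k:ℝ)) * (1 - 3 * (m:ℝ) / ((k:ℝ) + m)) with hx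
  have hx0 : 0 ≤ x := by
    apply mul_nonneg (by positivity)
    have : 3 * (m:ℝ) / ((k:ℝ) + m) ≤ 1 := (div_le_one hn0).2 h3m'
    linarith
  have hx1 : x ≤ 1 := by
    have h1 : 1 - 3 * (m:ℝ) / ((k:ℝ) + m) ≤ 1 := by
      have : (0:ℝ) ≤ 3 * (m:ℝ) / ((k:ℝ) + m) := by positivity
      linarith
    calc x ≤ 1 / (k:ℝ) * 1 := by
            apply mul_le_mul_of_nonneg_left h1 (by positivity)
         _ ≤ 1 := by
            rw [mul_one]
            exact div_le_one_of_le₀ (by exact_mod_cast hk) (by positivity)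
  set ℓ : ℝ := (k:ℝ) * Real.log m + c * k with hℓ
  have hℓ0 : 0 ≤ ℓ := by
    have hlog : 0 ≤ Real.log m := Real.log_nonneg (by exact_mod_cast hm)
    have : 0 ≤ (k:ℝ) * Real.log m := mul_nonneg hk0.le hlog
    have : 0 ≤ c * k := mul_nonneg hc hk0.le
    positivity
  have hbase : 1 - x ≤ Real.exp (-x) := by
    have := Real.add_one_le_exp (-x); linarith
  have hpow : (1 - x) ^ ℓ ≤ Real.exp (-x) ^ ℓ :=
    Real.rpow_le_rpow (by linarith) hbase hℓ0
  have hexp : Real.exp (-x) ^ ℓ = Real.exp (-x * ℓ) := by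
    rw [← Real.exp_mul]
  have key : (m:ℝ) * Real.exp (-x * ℓ) =
      Real.exp ((3 * (m:ℝ) * Real.log m - c * (((k:ℝ) + m) - 3 * m)) / ((k:ℝ) + m)) := by
    have heq : Real.log m + (-x * ℓ) =
        (3 * (m:ℝ) * Real.log m - c * (((k:ℝ) + m) - 3 * m)) / ((k:ℝ) + m) := by
      rw [hx, hℓ]
      field_simp
      ring
    rw [← heq, Real.exp_add, Real.exp_log hm0]
  calc (m:ℝ) * (1 - x) ^ ℓ ≤ (m:ℝ) * Real.exp (-x * ℓ) := by
        rw [← hexp]; exact mul_le_mul_of_nonneg_left hpow hm0.le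
    _ = _ := key
end

section
/- Let k ≥ 1 be an integer and let l, s ≥ 0 be integers. Then |{𝐢 ∈ [k]^s : |range(𝐢)| ≥ k − l}| ≤ k^s · e^{s/k} · (l + 1)/(k + 1); that is, the probability that s independent uniform samples from a set of size k contain at least k − l distinct values is at most e^{s/k}·(l+1)/(k+1). -/
/-!
Double counting. Identify `[k + 1]` with `Option (Fin k)`. A pair `(i, c)` of a sequence
`i ∈ [k]^s` and a point `c ∈ [k + 1]` is sent to `j = swap c none ∘ some ∘ i ∈ [k + 1]^s`
together with `c`; this is injective, `j` has as many distinct values as `i`, and `c` is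
not one of them. So `(k + 1) · #{i : |range i| ≥ k − l}` is at most the number of pairs
`(j, c)` with `c ∉ range j` and `|range j| ≥ k − l`, which is at most `(l + 1)(k + 1)^s`.
Finally `(k + 1)^s = k^s (1 + 1/k)^s ≤ k^s e^{s/k}`.
-/

open Finset

namespace Function

variable {σ α : Type*} [DecidableEq α]

def liftAvoiding (c : Option α) (i : σ → α) : σ → Option α :=
  fun x => Equiv.swap c none (some (i x))

theorem liftAvoiding_ne (c : Option α) (i : σ → α) (x : σ) : liftAvoiding c i x ≠ c := by
  intro h
  have := congrArg (Equiv.swap c none) h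
  simp [liftAvoiding] at this

theorem liftAvoiding_injective (c : Option α) : Injective (liftAvoiding (σ := σ) c) :=
  fun _ _ h => funext fun x =>
    Option.some_injective _ ((Equiv.swap c none).injective (congrFun h x))

theorem card_image_liftAvoiding [Fintype σ] (c : Option α) (i : σ → α) :
    #(univ.image (liftAvoiding c i)) = #(univ.image i) := by
  rw [show liftAvoiding c i = (Equiv.swap c none ∘ some) ∘ i from rfl, ← image_image,
    card_image_of_injective _ ((Equiv.swap c none).injective.comp (Option.some_injective α))]

end Function

open Function

theorem card_many_distinct_mul_le {σ α : Type*} [Fintype σ] [DecidableEq σ] [Fintype α]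
    [DecidableEq α] (l : ℕ) :
    #{i : σ → α | Fintype.card α - l ≤ #(univ.image i)} * (Fintype.card α + 1)
      ≤ (l + 1) * (Fintype.card α + 1) ^ Fintype.card σ := by
  set k := Fintype.card α
  set S : Finset (σ → Option α) := {j | k - l ≤ #(univ.image j)}
  have hS : #S ≤ (k + 1) ^ Fintype.card σ := by
    simpa [k] using card_le_univ S
  have hgaps : ∀ j ∈ S, #(univ.image j)ᶜ ≤ l + 1 := by
    intro j hj
    have : k - l ≤ #(univ.image j) := (mem_filter.1 hj).2
    rw [card_compl, Fintype.card_option]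
    omega
  calc #{i : σ → α | k - l ≤ #(univ.image i)} * (k + 1)
      = #((univ.filter fun i : σ → α => k - l ≤ #(univ.image i)) ×ˢ
          (univ : Finset (Option α))) := by
        rw [card_product, card_univ, Fintype.card_option]
    _ ≤ #(S.sigma fun j => (univ.image j)ᶜ) := by
        refine card_le_card_of_injOn (fun p => ⟨liftAvoiding p.2 p.1, p.2⟩) ?_ ?_
        · rintro ⟨i, c⟩ hi
          simp only [coe_product, Set.mem_prod, mem_coe, mem_filter, mem_univ, true_and] at hi
          simp only [coe_sigma, Set.mem_sigma_iff, mem_coe, mem_filter, mem_univ, true_and,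
            mem_compl, mem_image, not_exists, S, card_image_liftAvoiding]
          exact ⟨hi.1, liftAvoiding_ne c i⟩
        · rintro ⟨i, c⟩ - ⟨i', c'⟩ - h
          obtain ⟨h₁, h₂⟩ := Sigma.mk.inj_iff.1 h
          cases eq_of_heq h₂
          exact congrArg (·, c) (liftAvoiding_injective c h₁)
    _ = ∑ j ∈ S, #(univ.image j)ᶜ := card_sigma _ _
    _ ≤ #S * (l + 1) := sum_le_card_nsmul _ _ _ hgaps
    _ ≤ (l + 1) * (k + 1) ^ Fintype.card σ := by
        rw [mul_comm]; exact Nat.mul_le_mul_left _ hS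

theorem add_one_pow_le_pow_mul_exp_div {x : ℝ} (hx : 0 < x) (n : ℕ) :
    (x + 1) ^ n ≤ x ^ n * Real.exp (n / x) := by
  have h : x + 1 ≤ x * Real.exp (1 / x) := by
    calc x + 1 = x * (1 / x + 1) := by field_simp; ring
      _ ≤ x * Real.exp (1 / x) := by gcongr; exact Real.add_one_le_exp _
  calc (x + 1) ^ n ≤ (x * Real.exp (1 / x)) ^ n := by gcongr
    _ = x ^ n * Real.exp (n / x) := by rw [mul_pow, ← Real.exp_nat_mul, mul_one_div]

/-- The probability that `s` uniform samples from a set of size `k` contain at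
least `k − l` distinct values is at most `e^{s/k}·(l+1)/(k+1)`. -/
theorem many_distinct_values_bound (k : ℕ) (hk : 1 ≤ k) (l s : ℕ) :
    ((Finset.univ.filter (fun i : Fin s → Fin k =>
        k - l ≤ (Finset.image i Finset.univ).card)).card : ℝ)
      ≤ (k : ℝ) ^ s * Real.exp ((s : ℝ) / (k : ℝ)) * ((l : ℝ) + 1) / ((k : ℝ) + 1) := by
  have hcount : (#{i : Fin s → Fin k | k - l ≤ #(univ.image i)} : ℝ) * (k + 1)
      ≤ (l + 1) * (k + 1) ^ s := by
    exact_mod_cast (by simpa using card_many_distinct_mul_le (σ := Fin s) (α := Fin k) l)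
  have hk' : (0 : ℝ) < k := by exact_mod_cast hk
  rw [le_div_iff₀ (by positivity)]
  calc _ ≤ ((l : ℝ) + 1) * (k + 1) ^ s := hcount
    _ ≤ (l + 1) * (k ^ s * Real.exp (s / k)) := by
        gcongr; exact add_one_pow_le_pow_mul_exp_div hk' s
    _ = _ := by ring
end

section
/- Let k ≥ 1 be an integer, let l ≥ 0 be an integer, let δ ∈ [0, 1) be real, and let s ≥ 0 be an integer with s < k·ln((k+1)/(l+1)) + k·ln(1 − δ). Then |{𝐢 ∈ [k]^s : |range(𝐢)| ≥ k − l}| < (1 − δ)·k^s; that is, given s independent uniform samples from a set of size k, the probability of observing at least k − l distinct elements is strictly less than 1 − δ. -/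
open Finset

/-- The weight function used in the exponential-moment argument. -/
noncomputable def sampleWeight (k m : ℕ) : ℝ := ((k : ℝ) + 1) / ((k : ℝ) + 1 - (m : ℝ))

lemma sampleWeight_nonneg {k m : ℕ} (hm : m ≤ k) : 0 ≤ sampleWeight k m := by
  have : (m : ℝ) ≤ (k : ℝ) := by exact_mod_cast hm
  have hden : (0:ℝ) < (k : ℝ) + 1 - (m : ℝ) := by linarith
  exact div_nonneg (by positivity) hden.le

lemma image_cons {s k : ℕ} (x : Fin k) (f : Fin s → Fin k) :
    Finset.image (Fin.cons x f : Fin (s+1) → Fin k) Finset.univ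
      = insert x (Finset.image f Finset.univ) := by
  ext y
  simp only [Finset.mem_image, Finset.mem_insert, Finset.mem_univ, true_and]
  constructor
  · rintro ⟨a, rfl⟩
    induction a using Fin.cases with
    | zero => left; simp
    | succ j => right; exact ⟨j, by simp⟩
  · rintro (rfl | ⟨j, rfl⟩)
    · exact ⟨0, by simp⟩
    · exact ⟨j.succ, by simp⟩

/-- Step inequality: summing the weight over one more sample multiplies the
weight by at most `k + 1`. -/
lemma step_ineq (k m : ℕ) (hm : m ≤ k) :
    (m : ℝ) * sampleWeight k m + ((k - m : ℕ) : ℝ) * sampleWeight k (m + 1)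
      ≤ ((k : ℝ) + 1) * sampleWeight k m := by
  have hc : (m : ℝ) ≤ (k : ℝ) := by exact_mod_cast hm
  have hsub : ((k - m : ℕ) : ℝ) = (k : ℝ) - (m : ℝ) := by
    push_cast [Nat.cast_sub hm]; ring
  have hden : (0:ℝ) < (k : ℝ) + 1 - (m : ℝ) := by linarith
  rcases eq_or_lt_of_le hc with h | h
  · -- m = k : the second term vanishes
    rw [hsub, ← h]
    simp [sampleWeight, ← h]
    nlinarith [Nat.cast_nonneg (α := ℝ) m]
  · -- m < k : exact equality
    have hden2 : (0:ℝ) < (k : ℝ) - (m : ℝ) := by linarith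
    apply le_of_eq
    rw [hsub]
    unfold sampleWeight
    push_cast
    have h1 : (k : ℝ) + 1 - (m : ℝ) ≠ 0 := ne_of_gt hden
    have h2 : (k : ℝ) + 1 - ((m : ℝ) + 1) ≠ 0 := by
      intro h0; apply ne_of_gt hden2; linarith
    field_simp
    ring

/-- The key identity/inequality: the total weight of all sequences is at most
`(k+1)^s`. -/
lemma sum_weight_le (k : ℕ) : ∀ s : ℕ,
    ∑ f : Fin s → Fin k, sampleWeight k (Finset.image f Finset.univ).card
      ≤ ((k : ℝ) + 1) ^ s := by
  intro s
  induction s with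
  | zero =>
      have h0 : ((k : ℝ) + 1) ≠ 0 := by positivity
      simp [sampleWeight, div_self h0]
  | succ s ih =>
      have hcard : ∀ f : Fin s → Fin k, (Finset.image f Finset.univ).card ≤ k := by
        intro f
        calc (Finset.image f Finset.univ).card ≤ (Finset.univ : Finset (Fin k)).card :=
              Finset.card_le_card (Finset.subset_univ _)
          _ = k := by simp
      have hsum : ∑ f : Fin (s+1) → Fin k,
          sampleWeight k (Finset.image f Finset.univ).card
          = ∑ p : Fin k × (Fin s → Fin k),
              sampleWeight k (insert p.1 (Finset.image p.2 Finset.univ)).card := by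
        rw [← Fintype.sum_equiv (Fin.consEquiv (fun _ : Fin (s+1) => Fin k))
          (fun p => sampleWeight k (insert p.1 (Finset.image p.2 Finset.univ)).card)
          (fun f => sampleWeight k (Finset.image f Finset.univ).card)]
        intro p
        rcases p with ⟨x, f⟩
        show sampleWeight k (insert x (Finset.image f Finset.univ)).card
          = sampleWeight k (Finset.image (Fin.cons x f) Finset.univ).card
        rw [image_cons]
      rw [hsum, Fintype.sum_prod_type_right]
      -- for each f, sum over the extra coordinate
      have hinner : ∀ f : Fin s → Fin k,
          ∑ x : Fin k, sampleWeight k (insert x (Finset.image f Finset.univ)).card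
            ≤ ((k : ℝ) + 1) * sampleWeight k (Finset.image f Finset.univ).card := by
        intro f
        set R := Finset.image f Finset.univ with hR
        have hsplit : ∑ x ∈ R, sampleWeight k (insert x R).card
            + ∑ x ∈ Rᶜ, sampleWeight k (insert x R).card
            = ∑ x : Fin k, sampleWeight k (insert x R).card :=
          Finset.sum_add_sum_compl R _
        have h1 : ∑ x ∈ R, sampleWeight k (insert x R).card
            = (R.card : ℝ) * sampleWeight k R.card := by
          rw [Finset.sum_congr rfl (fun x hx => by rw [Finset.insert_eq_self.2 hx])]
          simp [mul_comm]
        have h2 : ∑ x ∈ Rᶜ, sampleWeight k (insert x R).card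
            = ((k - R.card : ℕ) : ℝ) * sampleWeight k (R.card + 1) := by
          rw [Finset.sum_congr rfl (fun x hx => by
            rw [Finset.card_insert_of_notMem (by simpa using hx)])]
          rw [Finset.sum_const, Finset.card_compl]
          simp [mul_comm]
        rw [← hsplit, h1, h2]
        exact step_ineq k R.card (hcard f)
      calc ∑ f : Fin s → Fin k,
            ∑ x : Fin k, sampleWeight k (insert x (Finset.image f Finset.univ)).card
          ≤ ∑ f : Fin s → Fin k,
            ((k : ℝ) + 1) * sampleWeight k (Finset.image f Finset.univ).card :=
            Finset.sum_le_sum (fun f _ => hinner f)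
        _ = ((k : ℝ) + 1) * ∑ f : Fin s → Fin k,
            sampleWeight k (Finset.image f Finset.univ).card := by
            rw [Finset.mul_sum]
        _ ≤ ((k : ℝ) + 1) * ((k : ℝ) + 1) ^ s := by
            apply mul_le_mul_of_nonneg_left ih (by positivity)
        _ = ((k : ℝ) + 1) ^ (s + 1) := by ring

/-- If `s < k·ln((k+1)/(l+1)) + k·ln(1 − δ)`, then the probability of observing
at least `k − l` distinct elements among `s` uniform samples from a set of size
`k` is strictly less than `1 − δ`. -/
theorem few_samples_few_distinct (k l : ℕ) (hk : 1 ≤ k)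
    (δ : ℝ) (hδ0 : 0 ≤ δ) (hδ1 : δ < 1)
    (s : ℕ)
    (hs : (s : ℝ) < (k : ℝ) * Real.log (((k : ℝ) + 1) / ((l : ℝ) + 1))
          + (k : ℝ) * Real.log (1 - δ)) :
    ((Finset.univ.filter (fun i : Fin s → Fin k =>
        k - l ≤ (Finset.image i Finset.univ).card)).card : ℝ)
      < (1 - δ) * (k : ℝ) ^ s := by
  have hK0 : (0:ℝ) < (k : ℝ) := by exact_mod_cast hk
  have hL1 : (0:ℝ) < (l : ℝ) + 1 := by positivity
  have hδ' : (0:ℝ) < 1 - δ := by linarith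
  -- first rule out l ≥ k
  have hlk : l < k := by
    by_contra hcon
    push_neg at hcon
    have h1 : Real.log (((k : ℝ) + 1) / ((l : ℝ) + 1)) ≤ 0 := by
      apply Real.log_nonpos
      · positivity
      · rw [div_le_one hL1]
        have : (k : ℝ) ≤ (l : ℝ) := by exact_mod_cast hcon
        linarith
    have h2 : Real.log (1 - δ) ≤ 0 := Real.log_nonpos (by linarith) (by linarith)
    have : (s : ℝ) < 0 := by
      calc (s : ℝ) < (k : ℝ) * Real.log (((k : ℝ) + 1) / ((l : ℝ) + 1))
            + (k : ℝ) * Real.log (1 - δ) := hs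
        _ ≤ 0 := by nlinarith
    exact absurd this (Nat.cast_nonneg s).not_gt
  have hcard : ∀ f : Fin s → Fin k, (Finset.image f Finset.univ).card ≤ k := by
    intro f
    calc (Finset.image f Finset.univ).card ≤ (Finset.univ : Finset (Fin k)).card :=
          Finset.card_le_card (Finset.subset_univ _)
      _ = k := by simp
  set q : ℝ := ((k : ℝ) + 1) / ((l : ℝ) + 1) with hq
  have hq0 : 0 < q := by positivity
  set F := Finset.univ.filter (fun i : Fin s → Fin k =>
        k - l ≤ (Finset.image i Finset.univ).card) with hF
  -- each counted sequence has weight at least q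
  have hwq : ∀ f ∈ F, q ≤ sampleWeight k (Finset.image f Finset.univ).card := by
    intro f hf
    rw [hF, Finset.mem_filter] at hf
    have hge : k - l ≤ (Finset.image f Finset.univ).card := hf.2
    have hge' : (k : ℝ) - (l : ℝ) ≤ ((Finset.image f Finset.univ).card : ℝ) := by
      have := Nat.cast_le (α := ℝ) |>.2 hge
      rwa [Nat.cast_sub hlk.le] at this
    have hle' : ((Finset.image f Finset.univ).card : ℝ) ≤ (k : ℝ) := by
      exact_mod_cast hcard f
    unfold sampleWeight
    rw [hq]
    apply div_le_div_of_nonneg_left (by positivity) (by linarith)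
    linarith
  -- main counting bound : card F * q ≤ (k+1)^s
  have hmain : (F.card : ℝ) * q ≤ ((k : ℝ) + 1) ^ s := by
    calc (F.card : ℝ) * q = ∑ _f ∈ F, q := by rw [Finset.sum_const]; simp [mul_comm]
      _ ≤ ∑ f ∈ F, sampleWeight k (Finset.image f Finset.univ).card :=
          Finset.sum_le_sum hwq
      _ ≤ ∑ f : Fin s → Fin k, sampleWeight k (Finset.image f Finset.univ).card := by
          apply Finset.sum_le_sum_of_subset_of_nonneg (Finset.subset_univ _)
          intro f _ _
          exact sampleWeight_nonneg (hcard f)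
      _ ≤ ((k : ℝ) + 1) ^ s := sum_weight_le k s
  -- (k+1)^s ≤ exp(s/k) * k^s
  have hexp1 : ((k : ℝ) + 1) ^ s ≤ Real.exp ((s : ℝ) / (k : ℝ)) * (k : ℝ) ^ s := by
    have h1 : (k : ℝ) + 1 ≤ Real.exp (1 / (k : ℝ)) * (k : ℝ) := by
      have := Real.add_one_le_exp (1 / (k : ℝ))
      have h2 : (1 / (k : ℝ) + 1) * (k : ℝ) ≤ Real.exp (1 / (k : ℝ)) * (k : ℝ) :=
        mul_le_mul_of_nonneg_right this hK0.le
      calc (k : ℝ) + 1 = (1 / (k : ℝ) + 1) * (k : ℝ) := by field_simp; ring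
        _ ≤ _ := h2
    calc ((k : ℝ) + 1) ^ s ≤ (Real.exp (1 / (k : ℝ)) * (k : ℝ)) ^ s :=
          pow_le_pow_left₀ (by positivity) h1 s
      _ = Real.exp ((s : ℝ) / (k : ℝ)) * (k : ℝ) ^ s := by
          rw [mul_pow, ← Real.exp_nat_mul]
          ring_nf
  -- exp(s/k) < q * (1-δ)
  have hexp2 : Real.exp ((s : ℝ) / (k : ℝ)) < q * (1 - δ) := by
    have hlog : Real.log q + Real.log (1 - δ) = Real.log (q * (1 - δ)) :=
      (Real.log_mul (ne_of_gt hq0) (ne_of_gt hδ')).symm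
    have hsk : (s : ℝ) / (k : ℝ) < Real.log (q * (1 - δ)) := by
      rw [div_lt_iff₀ hK0, ← hlog]
      calc (s : ℝ) < (k : ℝ) * Real.log q + (k : ℝ) * Real.log (1 - δ) := hs
        _ = (Real.log q + Real.log (1 - δ)) * (k : ℝ) := by ring
    calc Real.exp ((s : ℝ) / (k : ℝ)) < Real.exp (Real.log (q * (1 - δ))) :=
          Real.exp_lt_exp.2 hsk
      _ = q * (1 - δ) := Real.exp_log (by positivity)
  -- combine
  have hKs : (0:ℝ) < (k : ℝ) ^ s := by positivity
  have hfinal : (F.card : ℝ) * q < ((1 - δ) * (k : ℝ) ^ s) * q := by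
    calc (F.card : ℝ) * q ≤ ((k : ℝ) + 1) ^ s := hmain
      _ ≤ Real.exp ((s : ℝ) / (k : ℝ)) * (k : ℝ) ^ s := hexp1
      _ < (q * (1 - δ)) * (k : ℝ) ^ s := by
          exact mul_lt_mul_of_pos_right hexp2 hKs
      _ = ((1 - δ) * (k : ℝ) ^ s) * q := by ring
  exact lt_of_mul_lt_mul_right hfinal hq0.le
end

section
/- Let l, m be positive integers with l ≥ 10m, and let T ⊆ [l + 5m] be a fixed subset of size l. Then 2 · |{T' ⊆ [l + 5m] : |T'| = l and |T' ∩ T| ≥ l − m}| ≤ C(l + 5m, l); that is, a uniformly random size-l subset T' of [l + 5m] contains at least l − m elements of T with probability at most 1/2. -/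
/-!
Sort the size-`l` sets `T'` by `j = |T' \ T|`: there are `C(l, j) C(5m, j)` of them, and by
Vandermonde these numbers sum to `C(l + 5m, l)`. The sets to be counted are those with `j ≤ m`.
Since `C(n, ·)` increases up to `n / 2`, the shift `j ↦ j + m + 1` sends each of their terms to a
term at least as large (this needs `3m + 1 ≤ l` and `3m + 1 ≤ 5m`), so they make up at most half.
-/

open Finset

namespace Nat

theorem choose_le_choose_of_le_of_two_mul_le {n j k : ℕ} (hjk : j ≤ k) (hk : 2 * k ≤ n) :
    n.choose j ≤ n.choose k := by
  induction k, hjk using Nat.le_induction with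
  | base => rfl
  | succ k _ ih => exact (ih (by omega)).trans (choose_le_succ_of_lt_half_left (by omega))

theorem choose_le_choose_of_le_of_add_le {n j k : ℕ} (hjk : j ≤ k) (hn : j + k ≤ n) :
    n.choose j ≤ n.choose k := by
  rcases le_or_gt (2 * k) n with hk | hk
  · exact choose_le_choose_of_le_of_two_mul_le hjk hk
  · rw [← choose_symm (by omega : k ≤ n)]
    exact choose_le_choose_of_le_of_two_mul_le (by omega) (by omega)

theorem sum_range_choose_mul_choose (a b : ℕ) :
    ∑ j ∈ range (b + 1), a.choose j * b.choose j = (a + b).choose a := by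
  rw [choose_symm_add, add_choose_eq, Finset.Nat.sum_antidiagonal_eq_sum_range_succ_mk]
  refine sum_congr rfl fun j hj => ?_
  rw [choose_symm (mem_range_succ_iff.mp hj)]

theorem two_mul_sum_range_choose_mul_choose_le {a b m : ℕ} (ha : 3 * m + 1 ≤ a)
    (hb : 3 * m + 1 ≤ b) :
    2 * ∑ j ∈ range (m + 1), a.choose j * b.choose j ≤ (a + b).choose a := by
  set f := fun j => a.choose j * b.choose j
  have hshift : ∑ j ∈ range (m + 1), f j ≤ ∑ j ∈ range (m + 1), f (m + 1 + j) :=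
    sum_le_sum fun j hj => by
      have := mem_range_succ_iff.mp hj
      exact Nat.mul_le_mul (choose_le_choose_of_le_of_add_le (by omega) (by omega))
        (choose_le_choose_of_le_of_add_le (by omega) (by omega))
  calc 2 * ∑ j ∈ range (m + 1), f j
      ≤ ∑ j ∈ range (m + 1), f j + ∑ j ∈ range (m + 1), f (m + 1 + j) := by omega
    _ = ∑ j ∈ range (m + 1 + (m + 1)), f j := (sum_range_add ..).symm
    _ ≤ ∑ j ∈ range (b + 1), f j := sum_le_sum_of_subset (range_subset_range.mpr (by omega))
    _ = (a + b).choose a := sum_range_choose_mul_choose a b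

end Nat

namespace Finset

variable {α : Type*} [Fintype α] [DecidableEq α]

theorem card_powersetCard_filter_card_sdiff_eq (s : Finset α) {k j : ℕ} (hj : j ≤ k) :
    #{t ∈ powersetCard k univ | #(t \ s) = j} = (#s).choose (k - j) * (#sᶜ).choose j := by
  rw [← card_powersetCard, ← card_powersetCard, ← card_product]
  have hsplit {A B : Finset α} (hA : A ⊆ s) (hB : B ⊆ sᶜ) :
      (A ∪ B) ∩ s = A ∧ (A ∪ B) \ s = B := by
    grind [mem_compl]
  refine card_nbij' (fun t => (t ∩ s, t \ s)) (fun p => p.1 ∪ p.2) ?_ ?_ ?_ ?_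
  · intro t ht
    simp only [coe_filter, mem_powersetCard, subset_univ, true_and, Set.mem_ofPred_eq] at ht
    have := card_inter_add_card_sdiff t s
    simp only [coe_product, Set.mem_prod, mem_coe, mem_powersetCard]
    exact ⟨⟨inter_subset_right, by omega⟩, fun x hx => mem_compl.mpr (mem_sdiff.mp hx).2, ht.2⟩
  · rintro ⟨A, B⟩ hAB
    simp only [coe_product, Set.mem_prod, mem_coe, mem_powersetCard] at hAB
    obtain ⟨⟨hAs, hA⟩, hBs, hB⟩ := hAB
    simp only [coe_filter, mem_powersetCard, subset_univ, true_and, Set.mem_ofPred_eq,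
      card_union_of_disjoint (disjoint_compl_right.mono hAs hBs), (hsplit hAs hBs).2]
    omega
  · intro t _
    exact sup_inf_sdiff t s
  · rintro ⟨A, B⟩ hAB
    simp only [coe_product, Set.mem_prod, mem_coe, mem_powersetCard] at hAB
    obtain ⟨h1, h2⟩ := hsplit hAB.1.1 hAB.2.1
    simp [h1, h2]

theorem card_powersetCard_filter_card_sdiff_le (s : Finset α) {k m : ℕ} (hm : m ≤ k) :
    #{t ∈ powersetCard k univ | #(t \ s) ≤ m} =
      ∑ j ∈ range (m + 1), (#s).choose (k - j) * (#sᶜ).choose j := by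
  rw [card_eq_sum_card_fiberwise (f := fun t => #(t \ s)) (t := range (m + 1))
    fun t ht => mem_range_succ_iff.mpr (mem_filter.mp ht).2]
  refine sum_congr rfl fun j hj => ?_
  have hjm := mem_range_succ_iff.mp hj
  rw [filter_filter, ← card_powersetCard_filter_card_sdiff_eq s (hjm.trans hm)]
  congr 1
  exact filter_congr fun t _ => by dsimp only; omega

end Finset

/-- For `l ≥ 10m` and a fixed size-`l` subset `T` of `[l + 5m]`, a uniformly
random size-`l` subset `T'` of `[l + 5m]` contains at least `l − m` elements of
`T` with probability at most `1/2`: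
`2·|{T' : |T'| = l, |T' ∩ T| ≥ l − m}| ≤ C(l + 5m, l)`. -/
theorem random_subset_overlap (l m : ℕ) (hm : 1 ≤ m) (hl : 10 * m ≤ l)
    (T : Finset (Fin (l + 5 * m))) (hT : T.card = l) :
    2 * ((Finset.univ : Finset (Fin (l + 5 * m))).powerset.filter
          (fun T' => T'.card = l ∧ l - m ≤ (T' ∩ T).card)).card
      ≤ Nat.choose (l + 5 * m) l := by
  have hTc : #Tᶜ = 5 * m := by rw [card_compl, hT, Fintype.card_fin]; omega
  have hbad : {T' ∈ (univ : Finset (Fin (l + 5 * m))).powerset |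
        #T' = l ∧ l - m ≤ #(T' ∩ T)} =
      {T' ∈ powersetCard l (univ : Finset (Fin (l + 5 * m))) | #(T' \ T) ≤ m} := by
    ext T'
    have := card_inter_add_card_sdiff T' T
    have := card_le_card (inter_subset_right (s₁ := T') (s₂ := T))
    simp only [mem_filter, mem_powerset, mem_powersetCard, subset_univ, true_and]
    omega
  rw [hbad, card_powersetCard_filter_card_sdiff_le T (by omega), hT, hTc]
  calc 2 * ∑ j ∈ range (m + 1), l.choose (l - j) * (5 * m).choose j
      = 2 * ∑ j ∈ range (m + 1), l.choose j * (5 * m).choose j := by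
        congr 1
        exact sum_congr rfl fun j hj => by rw [Nat.choose_symm (by grind)]
    _ ≤ (l + 5 * m).choose l := Nat.two_mul_sum_range_choose_mul_choose_le (by omega) (by omega)
end
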